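/- arXiv:2108.10284 — 2 statements merged into one kernel-verified Lean document; each statement's English description precedes it below -/
import Mathlib

section
/- Let L : ℝ^p → ℝ be convex differentiable, μ > 0, and let x̂ minimize L(x) + (μ/2)Ω_excl(x)² with support 𝒥 = supp(x̂). Then for every group G with G ∩ 𝒥 = ∅, the gradient vanishes on G: [∇L(x̂)]_G = 0. -/
/-- The exclusive group sparsity norm on `ℝ^p`; groups are the fibers of `g`. -/
noncomputable def OmegaExcl {p k : ℕ} (g : Fin p → Fin k)
    (x : EuclideanSpace ℝ (Fin p)) : ℝ :=
  Real.sqrt (∑ j : Fin k, (∑ i ∈ Finset.univ.filter (fun i => g i = j), |x i|) ^ 2)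

/-!
Moving `x̂` along a coordinate `eᵢ` of a group on which `x̂` vanishes raises the squared
penalty by exactly `t²`: that group's `ℓ₁` norm goes from `0` to `|t|` and no other group
changes. Hence `t ↦ L(x̂ + t eᵢ) + (μ/2) t²` is minimal at `0`, and Fermat's rule gives
`∂ᵢL(x̂) = 0`.
-/

open Finset

theorem HasGradientAt.inner_eq_zero_of_forall_le_add_sq {E : Type*} [NormedAddCommGroup E]
    [InnerProductSpace ℝ E] [CompleteSpace E] {f : E → ℝ} {f' x : E}
    (hf : HasGradientAt f f' x) (v : E) (c : ℝ)
    (hmin : ∀ t : ℝ, f x ≤ f (x + t • v) + c * t ^ 2) :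
    inner ℝ f' v = 0 := by
  have hline : HasDerivAt (fun t : ℝ => x + t • v) v 0 := by
    simpa using ((hasDerivAt_id (0 : ℝ)).smul_const v).const_add x
  have hrestrict : HasDerivAt (fun t : ℝ => f (x + t • v)) (inner ℝ f' v) 0 := by
    have hf0 : HasFDerivAt f (InnerProductSpace.toDual ℝ E f') (x + (0 : ℝ) • v) := by
      simpa using hf.hasFDerivAt
    have h := hf0.comp_hasDerivAt 0 hline
    rwa [InnerProductSpace.toDual_apply_apply] at h
  have hφ : HasDerivAt (fun t : ℝ => f (x + t • v) + c * t ^ 2) (inner ℝ f' v) 0 :=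
    (hrestrict.add ((hasDerivAt_pow 2 (0 : ℝ)).const_mul c)).congr_deriv (by simp)
  refine IsLocalMin.hasDerivAt_eq_zero (Filter.Eventually.of_forall fun t => ?_) hφ
  simpa using hmin t

section OmegaExcl

variable {p k : ℕ} (g : Fin p → Fin k)

theorem omegaExcl_sq (x : EuclideanSpace ℝ (Fin p)) :
    OmegaExcl g x ^ 2 = ∑ j, (∑ i ∈ univ.filter (fun i => g i = j), |x i|) ^ 2 :=
  Real.sq_sqrt (by positivity)

variable {g} {x : EuclideanSpace ℝ (Fin p)} {i : Fin p}

theorem sq_sum_abs_add_single_of_group_eq_zero (hx : ∀ i', g i' = g i → x i' = 0)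
    (t : ℝ) (j : Fin k) :
    (∑ i' ∈ univ.filter (fun i' => g i' = j), |(x + t • EuclideanSpace.single i (1 : ℝ)) i'|) ^ 2
      = (∑ i' ∈ univ.filter (fun i' => g i' = j), |x i'|) ^ 2
        + if j = g i then t ^ 2 else 0 := by
  split_ifs with hj
  · subst hj
    have hsingle : ∀ i' ∈ univ.filter (fun i' => g i' = g i),
        |(x + t • EuclideanSpace.single i (1 : ℝ)) i'| = if i' = i then |t| else 0 := by
      intro i' hi'
      have hxi' := hx i' (mem_filter.1 hi').2
      by_cases h : i' = i
      · subst h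
        simp [hxi']
      · simp [h, hxi']
    have hzero : ∑ i' ∈ univ.filter (fun i' => g i' = g i), |x i'| = 0 :=
      sum_eq_zero fun i' hi' => by simp [hx i' (mem_filter.1 hi').2]
    rw [sum_congr rfl hsingle, sum_ite_eq', if_pos (by simp), hzero, sq_abs]
    ring
  · rw [add_zero]
    refine congrArg (· ^ 2) (sum_congr rfl fun i' hi' => ?_)
    have hi'i : i' ≠ i := by
      rintro rfl
      exact hj (mem_filter.1 hi').2.symm
    simp [hi'i]

theorem omegaExcl_sq_add_single_of_group_eq_zero (hx : ∀ i', g i' = g i → x i' = 0)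
    (t : ℝ) :
    OmegaExcl g (x + t • EuclideanSpace.single i (1 : ℝ)) ^ 2 = OmegaExcl g x ^ 2 + t ^ 2 := by
  simp only [omegaExcl_sq, sq_sum_abs_add_single_of_group_eq_zero hx, sum_add_distrib,
    sum_ite_eq', mem_univ, if_true]

end OmegaExcl

theorem grad_zero_on_inactive_groups_general {p k : ℕ} (g : Fin p → Fin k)
    (L : EuclideanSpace ℝ (Fin p) → ℝ)
    (L' : EuclideanSpace ℝ (Fin p) → EuclideanSpace ℝ (Fin p))
    (hL : ∀ y, HasGradientAt L (L' y) y)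
    (μ : ℝ) (xhat : EuclideanSpace ℝ (Fin p))
    (hmin : ∀ y, L xhat + μ / 2 * (OmegaExcl g xhat) ^ 2 ≤ L y + μ / 2 * (OmegaExcl g y) ^ 2) :
    ∀ j : Fin k, (∀ i, g i = j → xhat i = 0) → ∀ i, g i = j → L' xhat i = 0 := by
  rintro _ hj i rfl
  have hline : ∀ t : ℝ,
      L xhat ≤ L (xhat + t • EuclideanSpace.single i (1 : ℝ)) + μ / 2 * t ^ 2 := fun t => by
    have := hmin (xhat + t • EuclideanSpace.single i (1 : ℝ))
    rw [omegaExcl_sq_add_single_of_group_eq_zero hj] at this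
    linarith
  simpa [EuclideanSpace.inner_single_right] using
    (hL xhat).inner_eq_zero_of_forall_le_add_sq _ _ hline

/-- At a minimizer `xhat` of `L + (μ/2)Ω_excl²`, the gradient of `L` vanishes on every
group that does not intersect the support of `xhat`. -/
theorem grad_zero_on_inactive_groups {p k : ℕ} (g : Fin p → Fin k)
    (L : EuclideanSpace ℝ (Fin p) → ℝ)
    (L' : EuclideanSpace ℝ (Fin p) → EuclideanSpace ℝ (Fin p))
    (hL : ∀ y, HasGradientAt L (L' y) y)
    (hconv : ConvexOn ℝ Set.univ L)
    (μ : ℝ) (hμ : 0 < μ) (xhat : EuclideanSpace ℝ (Fin p))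
    (hmin : ∀ y, L xhat + μ / 2 * (OmegaExcl g xhat) ^ 2 ≤ L y + μ / 2 * (OmegaExcl g y) ^ 2) :
    ∀ j : Fin k, (∀ i, g i = j → xhat i = 0) → ∀ i, g i = j → L' xhat i = 0 :=
  grad_zero_on_inactive_groups_general g L L' hL μ xhat hmin
end

section
/- Let L : ℝ^p → ℝ be convex differentiable, μ > 0, and let x̂ minimize L(x) + (μ/2)Ω_excl(x)². Then for every group G intersecting the support 𝒥 of x̂ and every i ∈ G with x̂_i = 0, it holds |[∇L(x̂)]_i| ≤ μ ‖x̂_{G∩𝒥}‖₁. -/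
set_option maxHeartbeats 1000000 in
/-- At a minimizer `xhat` of `L + (μ/2)Ω_excl²`, for every group `G` intersecting the
support `𝒥` of `xhat` and every `i ∈ G` with `xhat_i = 0`, one has
`|[∇L(xhat)]_i| ≤ μ ‖xhat_{G∩𝒥}‖₁`. -/
theorem grad_bound_on_active_groups {p k : ℕ} (g : Fin p → Fin k)
    (L : EuclideanSpace ℝ (Fin p) → ℝ)
    (L' : EuclideanSpace ℝ (Fin p) → EuclideanSpace ℝ (Fin p))
    (hL : ∀ y, HasGradientAt L (L' y) y)
    (hconv : ConvexOn ℝ Set.univ L)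
    (μ : ℝ) (hμ : 0 < μ) (xhat : EuclideanSpace ℝ (Fin p))
    (hmin : ∀ y, L xhat + μ / 2 * (OmegaExcl g xhat) ^ 2 ≤ L y + μ / 2 * (OmegaExcl g y) ^ 2) :
    ∀ j : Fin k, (∃ i, g i = j ∧ xhat i ≠ 0) → ∀ i, g i = j → xhat i = 0 →
      |L' xhat i| ≤ μ * ∑ i' ∈ Finset.univ.filter (fun i' => g i' = j ∧ xhat i' ≠ 0), |xhat i'| := by
  intro j _hj i hgi hxi
  classical
  set E : EuclideanSpace ℝ (Fin p) := EuclideanSpace.single i (1:ℝ) with hE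
  set S : ℝ := ∑ i' ∈ Finset.univ.filter (fun i' => g i' = j), |xhat i'| with hSdef
  -- reduce goal to S
  have hS_eq : (∑ i' ∈ Finset.univ.filter (fun i' => g i' = j ∧ xhat i' ≠ 0), |xhat i'|) = S := by
    rw [hSdef]
    apply Finset.sum_subset
    · intro a ha
      simp only [Finset.mem_filter, Finset.mem_univ, true_and] at ha ⊢
      exact ha.1
    · intro a ha hna
      simp only [Finset.mem_filter, Finset.mem_univ, true_and, not_and, not_not] at ha hna
      simp [hna ha]
  rw [hS_eq]
  have hSnonneg : 0 ≤ S := Finset.sum_nonneg fun _ _ => abs_nonneg _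
  -- pointwise formula for perturbed vector
  have happ : ∀ (t : ℝ) (i' : Fin p), (xhat + t • E) i' = xhat i' + t * (if i' = i then 1 else 0) := by
    intro t i'
    simp [hE, EuclideanSpace.single_apply]
  -- squared Omega formula
  have hOm : ∀ z : EuclideanSpace ℝ (Fin p),
      (OmegaExcl g z) ^ 2 = ∑ j' : Fin k, (∑ i' ∈ Finset.univ.filter (fun i' => g i' = j'), |z i'|) ^ 2 := by
    intro z
    exact Real.sq_sqrt (Finset.sum_nonneg fun _ _ => sq_nonneg _)
  -- penalty change
  have hpen : ∀ t : ℝ, (OmegaExcl g (xhat + t • E)) ^ 2 = (OmegaExcl g xhat) ^ 2 + (2 * S * |t| + t ^ 2) := by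
    intro t
    rw [hOm, hOm]
    have hjmem : j ∈ (Finset.univ : Finset (Fin k)) := Finset.mem_univ j
    rw [← Finset.add_sum_erase _ _ hjmem, ← Finset.add_sum_erase _ _ hjmem]
    have h1 : ∀ j' ∈ Finset.univ.erase j,
        (∑ i' ∈ Finset.univ.filter (fun i' => g i' = j'), |(xhat + t • E) i'|) ^ 2
        = (∑ i' ∈ Finset.univ.filter (fun i' => g i' = j'), |xhat i'|) ^ 2 := by
      intro j' hj'
      have hne : j' ≠ j := (Finset.mem_erase.mp hj').1
      congr 1
      apply Finset.sum_congr rfl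
      intro a ha
      simp only [Finset.mem_filter, Finset.mem_univ, true_and] at ha
      have : a ≠ i := fun h => hne (by rw [← ha, h, hgi])
      rw [happ]
      simp [this]
    rw [Finset.sum_congr rfl h1]
    have himem : i ∈ Finset.univ.filter (fun i' => g i' = j) := by simp [hgi]
    have h2 : (∑ i' ∈ Finset.univ.filter (fun i' => g i' = j), |(xhat + t • E) i'|) = S + |t| := by
      rw [← Finset.add_sum_erase _ _ himem]
      have h3 : (∑ i' ∈ (Finset.univ.filter (fun i' => g i' = j)).erase i, |(xhat + t • E) i'|)
          = ∑ i' ∈ (Finset.univ.filter (fun i' => g i' = j)).erase i, |xhat i'| := by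
        apply Finset.sum_congr rfl
        intro a ha
        have : a ≠ i := (Finset.mem_erase.mp ha).1
        rw [happ]; simp [this]
      rw [h3, happ]
      have hS2 : S = |xhat i| + ∑ i' ∈ (Finset.univ.filter (fun i' => g i' = j)).erase i, |xhat i'| := by
        rw [hSdef, ← Finset.add_sum_erase _ _ himem]
      rw [hS2, hxi]
      simp
      ring
    rw [h2]
    have hsq : (S + |t|) ^ 2 = S ^ 2 + 2 * S * |t| + t ^ 2 := by
      rw [add_sq, sq_abs]
    rw [hsq]; ring
  -- key inequality from minimality
  have hkey : ∀ t : ℝ, 0 ≤ L (xhat + t • E) - L xhat + μ / 2 * (2 * S * |t| + t ^ 2) := by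
    intro t
    have := hmin (xhat + t • E)
    rw [hpen t] at this
    linarith
  -- derivative of f t = L (xhat + t • E) at 0
  set c : ℝ := L' xhat i with hc
  have hcurve : HasDerivAt (fun t : ℝ => xhat + t • E) E 0 := by
    have : HasDerivAt (fun t : ℝ => t • E) ((1:ℝ) • E) 0 := (hasDerivAt_id (0:ℝ)).smul_const E
    simpa using this.const_add xhat
  have hF : HasFDerivAt L ((InnerProductSpace.toDual ℝ _) (L' xhat)) xhat := (hL xhat).hasFDerivAt
  have hF' : HasFDerivAt L ((InnerProductSpace.toDual ℝ _) (L' xhat)) (xhat + (0:ℝ) • E) := by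
    simpa using hF
  have hf : HasDerivAt (fun t : ℝ => L (xhat + t • E)) c 0 := by
    have h := hF'.comp_hasDerivAt 0 hcurve
    have hval : (InnerProductSpace.toDual ℝ (EuclideanSpace ℝ (Fin p))) (L' xhat) E = c := by
      rw [InnerProductSpace.toDual_apply_apply, hE]
      simpa using EuclideanSpace.inner_single_right (𝕜 := ℝ) i 1 (L' xhat)
    rwa [hval] at h
  -- sign trick
  set σ : ℝ := if c < 0 then (-1:ℝ) else 1 with hσ
  have hσabs : c * (-σ) = -|c| := by
    rcases lt_or_ge c 0 with h | h
    · rw [hσ, if_pos h, abs_of_neg h]; ring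
    · rw [hσ, if_neg (not_lt.mpr h), abs_of_nonneg h]; ring
  have hg : HasDerivAt (fun s : ℝ => L (xhat + (-σ * s) • E)) (-|c|) 0 := by
    have hu : HasDerivAt (fun s : ℝ => -σ * s) (-σ) 0 := by
      simpa using (hasDerivAt_id (0:ℝ)).const_mul (-σ)
    have hf0 : HasDerivAt (fun t : ℝ => L (xhat + t • E)) c (-σ * 0) := by
      simpa using hf
    have h := hf0.comp (0:ℝ) hu
    rw [hσabs] at h
    exact h
  -- slope limit
  have hslope : Filter.Tendsto (slope (fun s : ℝ => L (xhat + (-σ * s) • E)) 0)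
      (nhdsWithin 0 (Set.Ioi 0)) (nhds (-|c|)) := by
    have := hasDerivAt_iff_tendsto_slope.mp hg
    exact this.mono_left (nhdsWithin_mono _ (fun s hs => ne_of_gt hs))
  have hlower : Filter.Tendsto (fun s : ℝ => -(μ * S) - μ * s / 2)
      (nhdsWithin 0 (Set.Ioi 0)) (nhds (-(μ * S))) := by
    have hcont : Continuous (fun s : ℝ => -(μ * S) - μ * s / 2) := by continuity
    have h := hcont.tendsto 0
    simpa using h.mono_left nhdsWithin_le_nhds
  have hineq : ∀ s ∈ Set.Ioi (0:ℝ),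
      -(μ * S) - μ * s / 2 ≤ slope (fun s : ℝ => L (xhat + (-σ * s) • E)) 0 s := by
    intro s hs
    have hs0 : (0:ℝ) < s := hs
    have habsσ : |σ| = 1 := by
      rcases lt_or_ge c 0 with h | h
      · rw [hσ, if_pos h]; norm_num
      · rw [hσ, if_neg (not_lt.mpr h)]; norm_num
    have habs : |(-σ * s)| = s := by
      rw [abs_mul, abs_neg, habsσ, one_mul, abs_of_pos hs0]
    have hk := hkey (-σ * s)
    rw [habs] at hk
    rw [slope_def_field]
    simp only [mul_zero, zero_smul, add_zero, sub_zero]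
    rw [le_div_iff₀ hs0]
    have hσsq : σ ^ 2 = 1 := by
      rcases lt_or_ge c 0 with h | h
      · rw [hσ, if_pos h]; norm_num
      · rw [hσ, if_neg (not_lt.mpr h)]; norm_num
    have hts : (-σ * s) ^ 2 = s ^ 2 := by
      rw [neg_mul, neg_sq, mul_pow, hσsq, one_mul]
    rw [hts] at hk
    nlinarith [hk]
  have hfinal : -(μ * S) ≤ -|c| :=
    le_of_tendsto_of_tendsto hlower hslope (eventually_nhdsWithin_of_forall hineq)
  have : |c| ≤ μ * S := by linarith
  exact this
end
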